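/- arXiv:math/0702723 — 7 statements merged into one kernel-verified Lean document; each statement's English description precedes it below -/
import Mathlib

section
/- Let A be an n×n Hermitian matrix whose index set is partitioned into r ≥ 2 parts such that all diagonal blocks of A (with respect to this partition) are zero. Then for every real diagonal n×n matrix B, the largest eigenvalue of B − A is at least the largest eigenvalue of B + (1/(r−1))·A. -/
open Matrix

/-- The largest (real) eigenvalue of a Hermitian complex matrix. -/
noncomputable def maxEigC {m : Type*} [Fintype m] [DecidableEq m]
    (A : Matrix m m ℂ) : ℝ := sSup {t : ℝ | (t : ℂ) ∈ spectrum ℂ A}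

/-!
Let `ω` be a primitive `r`-th root of unity and `U` the diagonal unitary with entry `ω ^ p j`.
Averaging the conjugates `(U ^ s)ᴴ M U ^ s` over `s < r` kills exactly the entries of `M` outside
the diagonal blocks. For `M = B - A` the full average is `r B`, so dropping the term `s = 0` gives
`∑_{s=1}^{r-1} (U ^ s)ᴴ (B - A) U ^ s = (r - 1) B + A = (r - 1) (B + A / (r - 1))`.
Each conjugate lies below `μ(B - A) • 1` in the Loewner order, hence so does `B + A / (r - 1)`.
-/

open Finset
open scoped MatrixOrder

lemma geom_sum_eq_ite_of_pow_eq_one {K : Type*} [DivisionRing K] [DecidableEq K] {ζ : K} {r : ℕ}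
    (h : ζ ^ r = 1) : ∑ s ∈ range r, ζ ^ s = if ζ = 1 then (r : K) else 0 := by
  split_ifs with h1
  · simp [h1]
  · rw [geom_sum_eq h1, h, sub_self, zero_div]

namespace Complex

lemma star_mul_self_eq_one {a : ℂ} (ha : ‖a‖ = 1) : star a * a = 1 := by
  rw [star_def, conj_mul', ha, ofReal_one, one_pow]

lemma star_mul_eq_one_iff {a b : ℂ} (ha : ‖a‖ = 1) : star a * b = 1 ↔ a = b := by
  have haa := star_mul_self_eq_one ha
  refine ⟨fun h => (mul_left_cancel₀ (left_ne_zero_of_mul_eq_one haa) (h.trans haa.symm)).symm, ?_⟩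
  rintro rfl
  exact haa

end Complex

namespace Matrix

variable {ι : Type*} [Fintype ι] [DecidableEq ι]

lemma maxEigC_eq_sSup_spectrum (M : Matrix ι ι ℂ) : maxEigC M = sSup (spectrum ℝ M) := by
  rw [← spectrum.preimage_algebraMap ℂ]
  rfl

lemma IsHermitian.maxEigC_le_iff [Nonempty ι] {M : Matrix ι ι ℂ} (hM : M.IsHermitian) {t : ℝ} :
    maxEigC M ≤ t ↔ M ≤ algebraMap ℝ _ t := by
  rw [le_algebraMap_iff_spectrum_le hM.isSelfAdjoint, maxEigC_eq_sSup_spectrum,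
    hM.spectrum_real_eq_range_eigenvalues]
  exact csSup_le_iff (Set.finite_range _).bddAbove (Set.range_nonempty _)

theorem IsHermitian.maxEigC_le_of_sum_conj_eq {σ : Type*} {S : Finset σ} (hS : S.Nonempty)
    {U : σ → Matrix ι ι ℂ} (hU : ∀ s ∈ S, U s ∈ unitary (Matrix ι ι ℂ)) {M N : Matrix ι ι ℂ}
    (hM : M.IsHermitian) (hN : N.IsHermitian)
    (h : ∑ s ∈ S, star (U s) * M * U s = #S • N) : maxEigC N ≤ maxEigC M := by
  cases isEmpty_or_nonempty ι
  · exact (congrArg maxEigC (Subsingleton.elim N M)).le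
  set t := maxEigC M
  have hconj : ∀ s ∈ S, star (U s) * M * U s ≤ algebraMap ℝ _ t := fun s hs => by
    calc star (U s) * M * U s ≤ star (U s) * algebraMap ℝ _ t * U s :=
          star_left_conjugate_le_conjugate (hM.maxEigC_le_iff.mp le_rfl) _
      _ = algebraMap ℝ _ t := by
          rw [← Algebra.commutes, mul_assoc, Unitary.star_mul_self_of_mem (hU s hs), mul_one]
  have hsum := Finset.sum_le_sum hconj
  rw [h, sum_const, ← Nat.cast_smul_eq_nsmul ℝ, ← Nat.cast_smul_eq_nsmul ℝ] at hsum
  have hS_pos : (0 : ℝ) < #S := by simpa using hS.card_pos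
  rw [hN.maxEigC_le_iff]
  exact (smul_le_smul_iff_of_pos_left hS_pos).mp hsum

lemma diagonal_mem_unitaryGroup {u : ι → ℂ} (hu : ∀ j, ‖u j‖ = 1) :
    diagonal u ∈ unitaryGroup ι ℂ := by
  rw [mem_unitaryGroup_iff', star_eq_conjTranspose, diagonal_conjTranspose, diagonal_mul_diagonal]
  simp only [Pi.star_apply, Complex.star_mul_self_eq_one (hu _), diagonal_one]

theorem sum_range_star_pow_mul_mul_pow_diagonal {r : ℕ} (hr : r ≠ 0) {u : ι → ℂ}
    (hu : ∀ j, u j ^ r = 1) (M : Matrix ι ι ℂ) :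
    ∑ s ∈ range r, star (diagonal u ^ s) * M * diagonal u ^ s =
      (r : ℂ) • of fun j k => if u j = u k then M j k else 0 := by
  ext j k
  have hζ : (star (u j) * u k) ^ r = 1 := by
    rw [mul_pow, ← star_pow, hu, hu, star_one, one_mul]
  have hterm : ∀ s, (star (diagonal u ^ s) * M * diagonal u ^ s) j k =
      (star (u j) * u k) ^ s * M j k := fun s => by
    simp only [diagonal_pow, star_eq_conjTranspose, diagonal_conjTranspose, star_pow,
      mul_diagonal, diagonal_mul, Pi.pow_apply, Pi.star_apply, RCLike.star_def, mul_pow]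
    ring
  simp only [sum_apply, hterm, ← sum_mul, geom_sum_eq_ite_of_pow_eq_one hζ,
    Complex.star_mul_eq_one_iff (Complex.norm_eq_one_of_pow_eq_one (hu j) hr), smul_apply,
    of_apply]
  split_ifs <;> simp

theorem sum_Ico_star_pow_mul_mul_pow_diagonal_sub {r : ℕ} (hr : r ≠ 0) {u : ι → ℂ}
    (hu : ∀ j, u j ^ r = 1) {A : Matrix ι ι ℂ} (hA : ∀ j k, u j = u k → A j k = 0) (d : ι → ℂ) :
    ∑ s ∈ Ico 1 r, star (diagonal u ^ s) * (diagonal d - A) * diagonal u ^ s =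
      ((r : ℂ) - 1) • diagonal d + A := by
  have hblocks : (of fun j k => if u j = u k then (diagonal d - A) j k else 0) = diagonal d := by
    ext j k
    by_cases hjk : u j = u k
    · simp [hjk, hA j k hjk]
    · have : j ≠ k := fun h => hjk (congrArg u h)
      simp [hjk, this]
  have h := sum_range_star_pow_mul_mul_pow_diagonal hr hu (diagonal d - A)
  rw [hblocks, sum_range_eq_add_Ico _ (Nat.pos_of_ne_zero hr), pow_zero, star_one, one_mul,
    mul_one, ← eq_sub_iff_add_eq'] at h
  rw [h]
  module

end Matrix

theorem stmt0_general {n r : ℕ} (hr : 2 ≤ r) (A : Matrix (Fin n) (Fin n) ℂ)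
    (hA : A.IsHermitian) (p : Fin n → Fin r)
    (hblock : ∀ j k : Fin n, p j = p k → A j k = 0) (b : Fin n → ℝ) :
    maxEigC (Matrix.diagonal (fun i => (b i : ℂ)) - A) ≥
      maxEigC (Matrix.diagonal (fun i => (b i : ℂ)) + ((r : ℂ) - 1)⁻¹ • A) := by
  set D := diagonal fun i => (b i : ℂ)
  have hD : D.IsHermitian := isHermitian_diagonal_iff.mpr fun i => Complex.conj_ofReal (b i)
  obtain ⟨ω, hω⟩ : ∃ ω : ℂ, IsPrimitiveRoot ω r := ⟨_, Complex.isPrimitiveRoot_exp r (by omega)⟩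
  set u : Fin n → ℂ := fun j => ω ^ (p j : ℕ)
  have hu : ∀ j, u j ^ r = 1 := fun j => by
    rw [← pow_mul, mul_comm, pow_mul, hω.pow_eq_one, one_pow]
  have hU : diagonal u ∈ unitaryGroup (Fin n) ℂ :=
    diagonal_mem_unitaryGroup fun j => Complex.norm_eq_one_of_pow_eq_one (hu j) (by omega)
  have hsum : ∑ s ∈ Ico 1 r, star (diagonal u ^ s) * (D - A) * diagonal u ^ s =
      #(Ico 1 r) • (D + ((r : ℂ) - 1)⁻¹ • A) := by
    rw [sum_Ico_star_pow_mul_mul_pow_diagonal_sub (by omega) hu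
      (fun j k h => hblock j k (Fin.ext (hω.pow_inj (p j).2 (p k).2 h))),
      Nat.card_Ico, ← Nat.cast_smul_eq_nsmul ℂ, Nat.cast_sub (by omega), Nat.cast_one, smul_add,
      smul_smul, mul_inv_cancel₀ (sub_ne_zero.mpr (Nat.cast_ne_one.mpr (by omega))), one_smul]
  exact (hD.sub hA).maxEigC_le_of_sum_conj_eq (nonempty_Ico.mpr (by omega))
    (fun s _ => pow_mem hU s) (hD.add (hA.smul (by simp [IsSelfAdjoint]))) hsum

/-- If a Hermitian matrix `A` is partitioned into `r ≥ 2` blocks with all diagonal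
blocks zero, then for every real diagonal matrix `B`,
`μ(B − A) ≥ μ(B + (1/(r−1))·A)`. -/
theorem stmt0 {n r : ℕ} (hr : 2 ≤ r) (A : Matrix (Fin n) (Fin n) ℂ)
    (hA : A.IsHermitian) (p : Fin n → Fin r) (hp : Function.Surjective p)
    (hblock : ∀ j k : Fin n, p j = p k → A j k = 0) (b : Fin n → ℝ) :
    maxEigC (Matrix.diagonal (fun i => (b i : ℂ)) - A) ≥
      maxEigC (Matrix.diagonal (fun i => (b i : ℂ)) + ((r : ℂ) - 1)⁻¹ • A) :=
  stmt0_general hr A hA p hblock b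
end

section
/- Let A be an n×n symmetric matrix with nonnegative entries that is irreducible, let R be the diagonal matrix whose i-th diagonal entry is the i-th row sum of A, and let r ≥ 2 be an integer. Then μ(R + (1/(r−1))·A) ≥ (r/(r−1))·μ(A), where μ denotes the largest eigenvalue. -/
/-!
Let `x` be a unit eigenvector of `A` for `μ(A)`. Since `A` is symmetric and nonnegative,
`xᵀ (R - A) x = ½ ∑ᵢⱼ Aᵢⱼ (xᵢ - xⱼ)² ≥ 0`, so with `c = 1/(r-1)` the Rayleigh quotient gives
`μ(R + c A) ≥ xᵀ R x + c xᵀ A x ≥ (1 + c) μ(A) = r/(r-1) · μ(A)`.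
-/

open Matrix

/-- The largest eigenvalue of a real matrix. -/
noncomputable def maxEigR {n : ℕ} (A : Matrix (Fin n) (Fin n) ℝ) : ℝ :=
  sSup (spectrum ℝ A)

/-- A matrix is irreducible: no nontrivial coordinate subset is invariant. -/
def Irred {n : ℕ} (A : Matrix (Fin n) (Fin n) ℝ) : Prop :=
  ∀ S : Set (Fin n), S.Nonempty → S ≠ Set.univ → ∃ i ∈ S, ∃ j, j ∉ S ∧ A i j ≠ 0

open scoped RealInnerProductSpace

namespace Matrix.IsHermitian

variable {n : Type*} [Fintype n] [DecidableEq n] {A : Matrix n n ℝ}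

lemma dotProduct_mulVec_le_of_eigenvalues_le (hA : A.IsHermitian) {c : ℝ}
    (hc : ∀ i, hA.eigenvalues i ≤ c) (x : EuclideanSpace ℝ n) :
    ⇑x ⬝ᵥ A *ᵥ ⇑x ≤ c * ‖x‖ ^ 2 := by
  set b := hA.eigenvectorBasis
  have hb : ∀ i, ⟪b i, WithLp.toLp 2 (A *ᵥ ⇑x)⟫ = hA.eigenvalues i * ⟪b i, x⟫ := by
    intro i
    simp only [EuclideanSpace.inner_eq_star_dotProduct, star_trivial]
    rw [dotProduct_comm, dotProduct_mulVec, ← mulVec_transpose, (isHermitian_iff_isSymm.mp hA).eq,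
      hA.mulVec_eigenvectorBasis, smul_dotProduct, smul_eq_mul, dotProduct_comm]
  calc ⇑x ⬝ᵥ A *ᵥ ⇑x = ⟪x, WithLp.toLp 2 (A *ᵥ ⇑x)⟫ := by
        simp [EuclideanSpace.inner_eq_star_dotProduct, dotProduct_comm]
    _ = ∑ i, hA.eigenvalues i * ⟪b i, x⟫ ^ 2 := by
        rw [← b.sum_inner_mul_inner]
        refine Finset.sum_congr rfl fun i _ => ?_
        rw [hb, real_inner_comm]; ring
    _ ≤ ∑ i, c * ⟪b i, x⟫ ^ 2 := by gcongr with i; exact hc i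
    _ = c * ‖x‖ ^ 2 := by
        rw [← Finset.mul_sum, ← real_inner_self_eq_norm_sq, ← b.sum_inner_mul_inner]
        simp_rw [real_inner_comm x, sq]

variable {n : ℕ} {A : Matrix (Fin n) (Fin n) ℝ}

lemma eigenvalues_le_maxEigR (hA : A.IsHermitian) (i : Fin n) : hA.eigenvalues i ≤ maxEigR A :=
  le_csSup finite_real_spectrum.bddAbove (hA.eigenvalues_mem_spectrum_real i)

lemma dotProduct_mulVec_le_maxEigR (hA : A.IsHermitian) (x : EuclideanSpace ℝ (Fin n)) :
    ⇑x ⬝ᵥ A *ᵥ ⇑x ≤ maxEigR A * ‖x‖ ^ 2 :=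
  hA.dotProduct_mulVec_le_of_eigenvalues_le hA.eigenvalues_le_maxEigR x

lemma exists_unit_eigenvector_maxEigR [Nonempty (Fin n)] (hA : A.IsHermitian) :
    ∃ x : EuclideanSpace ℝ (Fin n), ‖x‖ = 1 ∧ A *ᵥ ⇑x = maxEigR A • ⇑x := by
  obtain ⟨i, hi⟩ := Finite.exists_max hA.eigenvalues
  have hmax : maxEigR A = hA.eigenvalues i := by
    rw [maxEigR, hA.spectrum_real_eq_range_eigenvalues]
    exact IsGreatest.csSup_eq ⟨⟨i, rfl⟩, Set.forall_mem_range.2 hi⟩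
  exact ⟨hA.eigenvectorBasis i, hA.eigenvectorBasis.orthonormal.1 i,
    hmax ▸ hA.mulVec_eigenvectorBasis i⟩

end Matrix.IsHermitian

lemma maxEigR_of_isEmpty {n : ℕ} [IsEmpty (Fin n)] (A : Matrix (Fin n) (Fin n) ℝ) :
    maxEigR A = 0 := by
  rw [maxEigR, spectrum.of_subsingleton, Real.sSup_empty]

lemma EuclideanSpace.dotProduct_self_eq_norm_sq {n : Type*} [Fintype n] (x : EuclideanSpace ℝ n) :
    ⇑x ⬝ᵥ ⇑x = ‖x‖ ^ 2 := by
  rw [← real_inner_self_eq_norm_sq, EuclideanSpace.inner_eq_star_dotProduct, star_trivial]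

lemma Matrix.IsSymm.dotProduct_mulVec_le_diagonal_rowSum {n : Type*} [Fintype n] [DecidableEq n]
    {A : Matrix n n ℝ} (hA : A.IsSymm) (hA0 : ∀ i j, 0 ≤ A i j) (v : n → ℝ) :
    v ⬝ᵥ A *ᵥ v ≤ v ⬝ᵥ diagonal (fun i => ∑ j, A i j) *ᵥ v := by
  have hswap : ∑ i, ∑ j, A i j * v j ^ 2 = ∑ i, ∑ j, A i j * v i ^ 2 := by
    rw [Finset.sum_comm]
    simp_rw [hA.apply]
  have hdiag : v ⬝ᵥ diagonal (fun i => ∑ j, A i j) *ᵥ v = ∑ i, ∑ j, A i j * v i ^ 2 := by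
    simp only [mulVec_diagonal, dotProduct, Finset.sum_mul, Finset.mul_sum]
    exact Finset.sum_congr rfl fun i _ => Finset.sum_congr rfl fun j _ => by ring
  have hquad : v ⬝ᵥ A *ᵥ v = ∑ i, ∑ j, A i j * (v i * v j) := by
    simp only [mulVec, dotProduct, Finset.mul_sum]
    exact Finset.sum_congr rfl fun i _ => Finset.sum_congr rfl fun j _ => by ring
  have hgap : 2 * (v ⬝ᵥ diagonal (fun i => ∑ j, A i j) *ᵥ v - v ⬝ᵥ A *ᵥ v) =
      ∑ i, ∑ j, A i j * (v i - v j) ^ 2 := by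
    have hexpand : ∀ i j, A i j * (v i - v j) ^ 2 =
        A i j * v i ^ 2 + A i j * v j ^ 2 - 2 * (A i j * (v i * v j)) := fun i j => by ring
    simp only [hexpand, Finset.sum_sub_distrib, Finset.sum_add_distrib, ← Finset.mul_sum, hswap,
      hdiag, hquad]
    ring
  have hnonneg : 0 ≤ ∑ i, ∑ j, A i j * (v i - v j) ^ 2 :=
    Finset.sum_nonneg fun i _ => Finset.sum_nonneg fun j _ => mul_nonneg (hA0 i j) (sq_nonneg _)
  linarith

theorem stmt1_general {n r : ℕ} (hr : 2 ≤ r) (A : Matrix (Fin n) (Fin n) ℝ)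
    (hsym : A.IsSymm) (hnonneg : ∀ i j, 0 ≤ A i j) :
    maxEigR (Matrix.diagonal (fun i => ∑ j, A i j) + ((r : ℝ) - 1)⁻¹ • A) ≥
      ((r : ℝ) / ((r : ℝ) - 1)) * maxEigR A := by
  set R := diagonal (fun i => ∑ j, A i j)
  set c := ((r : ℝ) - 1)⁻¹
  have hA : A.IsHermitian := isHermitian_iff_isSymm.mpr hsym
  have hM : (R + c • A).IsHermitian :=
    isHermitian_iff_isSymm.mpr ((isSymm_diagonal _).add (hsym.smul c))
  cases isEmpty_or_nonempty (Fin n)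
  · simp [maxEigR_of_isEmpty]
  obtain ⟨x, hx, hAx⟩ := hA.exists_unit_eigenvector_maxEigR
  have hxAx : ⇑x ⬝ᵥ A *ᵥ ⇑x = maxEigR A := by
    rw [hAx, dotProduct_smul, EuclideanSpace.dotProduct_self_eq_norm_sq, hx, one_pow, smul_eq_mul,
      mul_one]
  have hr1 : (r : ℝ) - 1 ≠ 0 := by
    have : (2 : ℝ) ≤ r := by exact_mod_cast hr
    linarith
  calc (r : ℝ) / (r - 1) * maxEigR A = maxEigR A + c * maxEigR A := by
        simp only [c]; field_simp; ring
    _ ≤ ⇑x ⬝ᵥ R *ᵥ ⇑x + c * (⇑x ⬝ᵥ A *ᵥ ⇑x) := by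
        rw [← hxAx]
        gcongr
        exact hsym.dotProduct_mulVec_le_diagonal_rowSum hnonneg x
    _ = ⇑x ⬝ᵥ (R + c • A) *ᵥ ⇑x := by
        rw [add_mulVec, dotProduct_add, smul_mulVec, dotProduct_smul, smul_eq_mul]
    _ ≤ maxEigR (R + c • A) := by
        simpa [hx] using hM.dotProduct_mulVec_le_maxEigR x

/-- For an irreducible nonnegative symmetric matrix `A` with row-sum diagonal `R`
and `r ≥ 2`, `μ(R + (1/(r−1))·A) ≥ (r/(r−1))·μ(A)`. -/
theorem stmt1 {n r : ℕ} (hr : 2 ≤ r) (A : Matrix (Fin n) (Fin n) ℝ)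
    (hsym : A.IsSymm) (hnonneg : ∀ i j, 0 ≤ A i j) (hirr : Irred A) :
    maxEigR (Matrix.diagonal (fun i => ∑ j, A i j) + ((r : ℝ) - 1)⁻¹ • A) ≥
      ((r : ℝ) / ((r : ℝ) - 1)) * maxEigR A :=
  stmt1_general hr A hsym hnonneg
end

section
/- Let A be an irreducible nonnegative symmetric n×n matrix, R the diagonal matrix of its row sums, and r ≥ 2. If μ(R + (1/(r−1))·A) = (r/(r−1))·μ(A), then all row sums of A are equal. -/
/-!
Let `μ = μ(A)` with eigenvector `v`, and `c = 1/(r-1)`, so that `r/(r-1) = 1 + c`. The Rayleigh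
quotient of `R + c A` at `v` is at most `(1 + c) μ`, while it equals `vᵀRv/vᵀv + c μ`; hence
`vᵀ(R - A)v ≤ 0`. But `2 vᵀ(R - A)v = ∑ᵢⱼ Aᵢⱼ (vᵢ - vⱼ)²` is a sum of nonnegative terms, so `v` is
constant along every nonzero entry of `A`, hence constant by irreducibility. Then `A v = μ v` says
that every row sum equals `μ`.
-/

open Matrix

namespace Matrix

section WeightedLaplacian

variable {ι : Type*} [Fintype ι]

theorem IsSymm.two_mul_dotProduct_diagonal_sub_mulVec {R : Type*} [CommRing R] [DecidableEq ι]
    {A : Matrix ι ι R} (hA : A.IsSymm) (v : ι → R) :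
    2 * (v ⬝ᵥ (diagonal (fun i => ∑ j, A i j) - A) *ᵥ v) =
      ∑ i, ∑ j, A i j * (v i - v j) ^ 2 := by
  have hdiag : v ⬝ᵥ diagonal (fun i => ∑ j, A i j) *ᵥ v = ∑ i, ∑ j, A i j * v i ^ 2 := by
    simp only [dotProduct, mulVec_diagonal, Finset.sum_mul, Finset.mul_sum]
    exact Finset.sum_congr rfl fun i _ => Finset.sum_congr rfl fun j _ => by ring
  have hoff : v ⬝ᵥ A *ᵥ v = ∑ i, ∑ j, A i j * (v i * v j) := by
    simp only [dotProduct, mulVec, Finset.mul_sum]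
    exact Finset.sum_congr rfl fun i _ => Finset.sum_congr rfl fun j _ => by ring
  have hswap : ∑ i, ∑ j, A i j * v j ^ 2 = ∑ i, ∑ j, A i j * v i ^ 2 := by
    rw [Finset.sum_comm]
    simp_rw [hA.apply]
  have hexpand : ∀ i j, A i j * (v i - v j) ^ 2 =
      A i j * v i ^ 2 - 2 * (A i j * (v i * v j)) + A i j * v j ^ 2 := fun i j => by ring
  simp only [hexpand, Finset.sum_add_distrib, Finset.sum_sub_distrib, ← Finset.mul_sum, hswap,
    sub_mulVec, dotProduct_sub, hdiag, hoff]
  ring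

theorem apply_eq_of_sum_mul_sub_sq_nonpos {A : Matrix ι ι ℝ} (hA : ∀ i j, 0 ≤ A i j)
    {v : ι → ℝ} (hv : ∑ i, ∑ j, A i j * (v i - v j) ^ 2 ≤ 0) {i j : ι} (hij : A i j ≠ 0) :
    v i = v j := by
  have hterm : ∀ i j, 0 ≤ A i j * (v i - v j) ^ 2 := fun i j => mul_nonneg (hA i j) (sq_nonneg _)
  have hzero : A i j * (v i - v j) ^ 2 = 0 := by
    refine le_antisymm ?_ (hterm i j)
    calc A i j * (v i - v j) ^ 2 ≤ ∑ j', A i j' * (v i - v j') ^ 2 :=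
          Finset.single_le_sum (fun j' _ => hterm i j') (Finset.mem_univ j)
      _ ≤ ∑ i', ∑ j', A i' j' * (v i' - v j') ^ 2 :=
          Finset.single_le_sum (f := fun i' => ∑ j', A i' j' * (v i' - v j') ^ 2)
            (fun i' _ => Finset.sum_nonneg fun j' _ => hterm i' j') (Finset.mem_univ i)
      _ ≤ 0 := hv
  simpa [hij, sub_eq_zero] using hzero

theorem sum_apply_eq_of_mulVec_eq_smul_of_const {R : Type*} [Field R] {A : Matrix ι ι R}
    {v : ι → R} {μ : R} (hv : A *ᵥ v = μ • v) (hv0 : v ≠ 0) (hconst : ∀ i j, v i = v j)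
    (i : ι) : ∑ k, A i k = μ := by
  obtain ⟨i₀, hi₀⟩ := Function.ne_iff.mp hv0
  have hrow := congrFun hv i
  simp only [mulVec, dotProduct, Pi.smul_apply, smul_eq_mul, hconst _ i₀, ← Finset.sum_mul] at hrow
  exact mul_right_cancel₀ hi₀ hrow

end WeightedLaplacian

end Matrix

theorem Irred.eq_of_forall_ne_zero {n : ℕ} {α : Type*} {A : Matrix (Fin n) (Fin n) ℝ}
    (hA : Irred A) {v : Fin n → α} (hv : ∀ i j, A i j ≠ 0 → v i = v j) (i j : Fin n) :
    v i = v j := by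
  by_contra hne
  have hS : {k | v k = v i} ≠ Set.univ := fun h =>
    hne (show j ∈ {k | v k = v i} from h ▸ Set.mem_univ j).symm
  obtain ⟨k, hk, l, hl, hkl⟩ := hA {k | v k = v i} ⟨i, rfl⟩ hS
  exact hl ((hv k l hkl).symm.trans hk)

section MaxEigenvalue

variable {n : ℕ}

theorem maxEigR_mem_spectrum [NeZero n] {A : Matrix (Fin n) (Fin n) ℝ} (hA : A.IsHermitian) :
    maxEigR A ∈ spectrum ℝ A :=
  (hA.spectrum_real_eq_range_eigenvalues ▸ Set.range_nonempty _).csSup_mem A.finite_spectrum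

theorem exists_mulVec_eq_maxEigR_smul [NeZero n] {A : Matrix (Fin n) (Fin n) ℝ}
    (hA : A.IsHermitian) : ∃ v ≠ 0, A *ᵥ v = maxEigR A • v := by
  have hμ : Module.End.HasEigenvalue (toLin' A) (maxEigR A) := by
    rw [Module.End.hasEigenvalue_iff_mem_spectrum, spectrum_toLin']
    exact maxEigR_mem_spectrum hA
  obtain ⟨v, hv⟩ := hμ.exists_hasEigenvector
  exact ⟨v, hv.2, by simpa using Module.End.mem_eigenspace_iff.mp hv.1⟩

open scoped MatrixOrder in
theorem dotProduct_mulVec_le_maxEigR_mul {A : Matrix (Fin n) (Fin n) ℝ} (hA : A.IsHermitian)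
    (v : Fin n → ℝ) : v ⬝ᵥ A *ᵥ v ≤ maxEigR A * (v ⬝ᵥ v) := by
  have hle : A ≤ algebraMap ℝ _ (maxEigR A) :=
    le_algebraMap_of_spectrum_le (fun x hx => le_csSup A.finite_spectrum.bddAbove hx) hA
  simpa [sub_mulVec, Algebra.algebraMap_eq_smul_one, smul_mulVec, dotProduct_sub] using
    (Matrix.le_iff.mp hle).dotProduct_mulVec_nonneg v

end MaxEigenvalue

/-- If `μ(R + (1/(r−1))·A) = (r/(r−1))·μ(A)` for an irreducible nonnegative
symmetric matrix `A`, then all row sums of `A` are equal. -/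
theorem stmt3 {n r : ℕ} (hr : 2 ≤ r) (A : Matrix (Fin n) (Fin n) ℝ)
    (hsym : A.IsSymm) (hnonneg : ∀ i j, 0 ≤ A i j) (hirr : Irred A)
    (heq : maxEigR (Matrix.diagonal (fun i => ∑ j, A i j) + ((r : ℝ) - 1)⁻¹ • A) =
      ((r : ℝ) / ((r : ℝ) - 1)) * maxEigR A) :
    ∀ i j : Fin n, ∑ k, A i k = ∑ k, A j k := by
  obtain _ | n := n
  · exact fun i => i.elim0
  have hratio : (r : ℝ) / ((r : ℝ) - 1) = 1 + ((r : ℝ) - 1)⁻¹ := by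
    have hr1 : (r : ℝ) - 1 ≠ 0 := sub_ne_zero.mpr (by norm_cast; omega)
    field_simp
    ring
  set c : ℝ := ((r : ℝ) - 1)⁻¹
  have hB : (diagonal (fun i => ∑ j, A i j) + c • A).IsHermitian :=
    isHermitian_iff_isSymm.mpr ((isSymm_diagonal _).add (hsym.smul c))
  obtain ⟨v, hv0, hv⟩ := exists_mulVec_eq_maxEigR_smul (isHermitian_iff_isSymm.mpr hsym)
  have hAv : v ⬝ᵥ A *ᵥ v = maxEigR A * (v ⬝ᵥ v) := by rw [hv, dotProduct_smul, smul_eq_mul]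
  have hlap : ∑ i, ∑ j, A i j * (v i - v j) ^ 2 ≤ 0 := by
    have hray := dotProduct_mulVec_le_maxEigR_mul hB v
    rw [heq, hratio, add_mulVec, dotProduct_add, smul_mulVec, dotProduct_smul, smul_eq_mul,
      hAv] at hray
    rw [← hsym.two_mul_dotProduct_diagonal_sub_mulVec, sub_mulVec, dotProduct_sub, hAv]
    linarith
  have hconst :=
    hirr.eq_of_forall_ne_zero fun _ _ => apply_eq_of_sum_mul_sub_sq_nonpos hnonneg hlap
  intro i j
  rw [sum_apply_eq_of_mulVec_eq_smul_of_const hv hv0 hconst i,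
    sum_apply_eq_of_mulVec_eq_smul_of_const hv hv0 hconst j]
end

section
/- (Hoffman's chromatic bound) Let G be a graph with at least one edge, A its adjacency matrix, μ(A) its largest eigenvalue and μ_min(A) its smallest eigenvalue. Then χ(G) ≥ 1 + μ(A)/(−μ_min(A)). -/
open Matrix SimpleGraph

noncomputable def minEigR {n : ℕ} (A : Matrix (Fin n) (Fin n) ℝ) : ℝ :=
  sInf (spectrum ℝ A)

/-!
Write `μ = μ(A)` and `m = μ_min(A)`, and let `x` be a unit `μ`-eigenvector; `m ‖z‖² ≤ zᵀ A z` for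
all `z`. For a colouring with `k` classes let `xᵢ` be the restriction of `x` to class `i`; each class
is independent, so `xᵢᵀ A xᵢ = 0`. Testing the Rayleigh bound on `x - k xᵢ` and summing over `i`,
using `∑ ‖xᵢ‖² = 1`, gives `m k (k - 1) ≤ -k μ`, i.e. `μ + (k - 1) m ≤ 0`. An edge `uv` gives
`m ≤ -1` via the test vector `e_u - e_v`, so one may divide by `-m`.
-/

namespace Matrix

section Spectrum

variable {ι : Type*} [Fintype ι] [DecidableEq ι] {A : Matrix ι ι ℝ}

open scoped MatrixOrder in
theorem IsHermitian.mul_dotProduct_self_le (hA : A.IsHermitian) {c : ℝ}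
    (hc : ∀ r ∈ spectrum ℝ A, c ≤ r) (z : ι → ℝ) : c * (z ⬝ᵥ z) ≤ z ⬝ᵥ (A *ᵥ z) := by
  have h : algebraMap ℝ (Matrix ι ι ℝ) c ≤ A :=
    algebraMap_le_of_le_spectrum hc (ha := hA.isSelfAdjoint)
  simpa [sub_mulVec, dotProduct_sub, Algebra.algebraMap_eq_smul_one, smul_mulVec, sub_nonneg]
    using (le_iff.mp h).dotProduct_mulVec_nonneg z

theorem IsHermitian.exists_unit_eigenvector_of_mem_spectrum (hA : A.IsHermitian) {r : ℝ}
    (hr : r ∈ spectrum ℝ A) : ∃ x : ι → ℝ, A *ᵥ x = r • x ∧ x ⬝ᵥ x = 1 := by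
  obtain ⟨j, rfl⟩ := hA.spectrum_real_eq_range_eigenvalues ▸ hr
  refine ⟨_, hA.mulVec_eigenvectorBasis j, ?_⟩
  have h := real_inner_self_eq_norm_sq (hA.eigenvectorBasis j)
  rwa [hA.eigenvectorBasis.orthonormal.1 j, one_pow, EuclideanSpace.inner_eq_star_dotProduct,
    star_trivial] at h

theorem IsHermitian.sSup_spectrum_mem [Nonempty ι] (hA : A.IsHermitian) :
    sSup (spectrum ℝ A) ∈ spectrum ℝ A :=
  (hA.spectrum_real_eq_range_eigenvalues ▸ Set.range_nonempty _).csSup_mem A.finite_real_spectrum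

end Spectrum

section Partition

variable {ι κ : Type*} [Fintype ι] [Fintype κ] {A : Matrix ι ι ℝ}

theorem sum_indicator_fiber_dotProduct (f : ι → κ) (x y : ι → ℝ) :
    ∑ i, {v | f v = i}.indicator x ⬝ᵥ {v | f v = i}.indicator y = x ⬝ᵥ y := by
  classical
  simp only [dotProduct]
  rw [Finset.sum_comm]
  refine Finset.sum_congr rfl fun v _ => ?_
  simp [Set.indicator_apply]

theorem indicator_dotProduct_indicator_self (s : Set ι) (x : ι → ℝ) :
    s.indicator x ⬝ᵥ s.indicator x = x ⬝ᵥ s.indicator x := by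
  classical
  refine Finset.sum_congr rfl fun v _ => ?_
  by_cases hv : v ∈ s <;> simp [hv]

theorem indicator_dotProduct_mulVec_indicator_eq_zero {s : Set ι}
    (hs : ∀ u ∈ s, ∀ v ∈ s, A u v = 0) (x : ι → ℝ) :
    s.indicator x ⬝ᵥ (A *ᵥ s.indicator x) = 0 := by
  classical
  simp only [dotProduct, mulVec, Finset.mul_sum]
  refine Finset.sum_eq_zero fun u _ => Finset.sum_eq_zero fun v _ => ?_
  by_cases hu : u ∈ s
  · by_cases hv : v ∈ s
    · simp [hs u hu v hv]
    · simp [hv]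
  · simp [hu]

theorem IsSymm.dotProduct_mulVec_comm (hA : A.IsSymm) (x y : ι → ℝ) :
    x ⬝ᵥ (A *ᵥ y) = y ⬝ᵥ (A *ᵥ x) := by
  rw [dotProduct_mulVec, ← mulVec_transpose, hA.eq, dotProduct_comm]

variable {c μ : ℝ} {x : ι → ℝ}

theorem IsSymm.le_of_eigenvector_sub_smul (hA : A.IsSymm)
    (hc : ∀ z, c * (z ⬝ᵥ z) ≤ z ⬝ᵥ (A *ᵥ z)) (hx : A *ᵥ x = μ • x) (hx1 : x ⬝ᵥ x = 1)
    {y : ι → ℝ} (hy : y ⬝ᵥ (A *ᵥ y) = 0) (hxy : x ⬝ᵥ y = y ⬝ᵥ y) (t : ℝ) :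
    c * (1 - 2 * t * (y ⬝ᵥ y) + t ^ 2 * (y ⬝ᵥ y)) ≤ μ * (1 - 2 * t * (y ⬝ᵥ y)) := by
  have hyx : y ⬝ᵥ x = y ⬝ᵥ y := by rw [dotProduct_comm, hxy]
  have hyAx : y ⬝ᵥ (A *ᵥ x) = μ * (y ⬝ᵥ y) := by rw [hx, dotProduct_smul, hyx, smul_eq_mul]
  have hxAy : x ⬝ᵥ (A *ᵥ y) = μ * (y ⬝ᵥ y) := by rw [hA.dotProduct_mulVec_comm, hyAx]
  have hxAx : x ⬝ᵥ (A *ᵥ x) = μ := by rw [hx, dotProduct_smul, hx1, smul_eq_mul, mul_one]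
  convert hc (x - t • y) using 1
  · simp only [sub_dotProduct, dotProduct_sub, smul_dotProduct, dotProduct_smul, smul_eq_mul,
      hx1, hxy, hyx]
    ring
  · simp only [mulVec_sub, mulVec_smul, sub_dotProduct, dotProduct_sub, smul_dotProduct,
      dotProduct_smul, smul_eq_mul, hxAx, hxAy, hyAx, hy]
    ring

theorem IsSymm.add_card_sub_one_mul_le_zero (hA : A.IsSymm)
    (hc : ∀ z, c * (z ⬝ᵥ z) ≤ z ⬝ᵥ (A *ᵥ z)) (hx : A *ᵥ x = μ • x) (hx1 : x ⬝ᵥ x = 1)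
    (f : ι → κ) (hf : ∀ u v, f u = f v → A u v = 0) :
    μ + (Fintype.card κ - 1) * c ≤ 0 := by
  have hsum : ∑ i, {v | f v = i}.indicator x ⬝ᵥ {v | f v = i}.indicator x = 1 :=
    (sum_indicator_fiber_dotProduct f x x).trans hx1
  have hk : (0 : ℝ) < Fintype.card κ := by
    have : Nonempty κ := by
      by_contra h
      simp [not_nonempty_iff.mp h] at hsum
    exact_mod_cast Fintype.card_pos
  have hsummed : c * (Fintype.card κ * (Fintype.card κ - 1)) ≤ μ * -Fintype.card κ := by
    have := Finset.sum_le_sum fun i (_ : i ∈ Finset.univ) =>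
      hA.le_of_eigenvector_sub_smul hc hx hx1
        (indicator_dotProduct_mulVec_indicator_eq_zero (s := {v | f v = i})
          (fun u hu v hv => hf u v (hu.trans hv.symm)) x)
        (indicator_dotProduct_indicator_self _ x).symm (Fintype.card κ)
    simp only [← Finset.mul_sum, Finset.sum_add_distrib, Finset.sum_sub_distrib, hsum,
      Finset.sum_const, Finset.card_univ, nsmul_eq_mul, mul_one] at this
    linear_combination this
  nlinarith

end Partition

end Matrix

theorem minEigR_mul_dotProduct_self_le {n : ℕ} {A : Matrix (Fin n) (Fin n) ℝ}
    (hA : A.IsHermitian) (z : Fin n → ℝ) : minEigR A * (z ⬝ᵥ z) ≤ z ⬝ᵥ (A *ᵥ z) :=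
  hA.mul_dotProduct_self_le (fun _ hr => csInf_le A.finite_real_spectrum.bddBelow hr) z

theorem SimpleGraph.single_sub_single_dotProduct_adjMatrix_mulVec {V : Type*} [Fintype V]
    [DecidableEq V] (G : SimpleGraph V) [DecidableRel G.Adj] {u v : V} (huv : G.Adj u v) :
    (Pi.single u 1 - Pi.single v 1 : V → ℝ) ⬝ᵥ
      (G.adjMatrix ℝ *ᵥ (Pi.single u 1 - Pi.single v 1)) = -2 := by
  norm_num [mulVec_sub, dotProduct_sub, mulVec_single, huv, huv.symm]

theorem minEigR_adjMatrix_le_neg_one {n : ℕ} (G : SimpleGraph (Fin n)) [DecidableRel G.Adj]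
    {u v : Fin n} (huv : G.Adj u v) : minEigR (G.adjMatrix ℝ) ≤ -1 := by
  have hnorm : (Pi.single u 1 - Pi.single v 1 : Fin n → ℝ) ⬝ᵥ
      (Pi.single u 1 - Pi.single v 1) = 2 := by
    norm_num [dotProduct_sub, G.ne_of_adj huv, (G.ne_of_adj huv).symm]
  have h := minEigR_mul_dotProduct_self_le (isHermitian_iff_isSymm.2 G.isSymm_adjMatrix)
    (Pi.single u 1 - Pi.single v 1)
  rw [hnorm, G.single_sub_single_dotProduct_adjMatrix_mulVec huv] at h
  linarith

/-- Hoffman's bound: `χ(G) ≥ 1 + μ(A)/(−μ_min(A))` for a graph with an edge,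
stated via `k`-colorability for every `k`. -/
theorem stmt6 {n : ℕ} (G : SimpleGraph (Fin n)) [DecidableRel G.Adj]
    (hedge : ∃ u v, G.Adj u v) :
    ∀ k : ℕ, G.Colorable k →
      (k : ℝ) ≥ 1 + maxEigR (G.adjMatrix ℝ) / (- minEigR (G.adjMatrix ℝ)) := by
  rintro k ⟨C⟩
  obtain ⟨u, v, huv⟩ := hedge
  have : Nonempty (Fin n) := ⟨u⟩
  have hA : (G.adjMatrix ℝ).IsHermitian := isHermitian_iff_isSymm.2 G.isSymm_adjMatrix
  obtain ⟨x, hx, hx1⟩ :=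
    hA.exists_unit_eigenvector_of_mem_spectrum (r := maxEigR _) hA.sSup_spectrum_mem
  have hbound := G.isSymm_adjMatrix.add_card_sub_one_mul_le_zero
    (minEigR_mul_dotProduct_self_le hA) hx hx1 C
    (fun a b hab => by simpa [adjMatrix_apply] using fun h => C.valid h hab)
  rw [Fintype.card_fin] at hbound
  have hneg : 0 < -minEigR (G.adjMatrix ℝ) := by linarith [minEigR_adjMatrix_le_neg_one G huv]
  rw [ge_iff_le, ← le_sub_iff_add_le', div_le_iff₀ hneg]
  linarith
end

section
/- Let G be a connected graph with chromatic number r ≥ 2, adjacency matrix A, degree diagonal matrix D, and Laplacian L = D − A. Then μ(D + (1/(r−1))A) ≤ (r−1)·μ(L), where μ denotes the largest eigenvalue. -/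
/-!
Restrict a test vector `x` to the colour classes of a proper `r`-colouring, `x = ∑ₛ xₛ`, and
apply the Rayleigh bound `yᵀ L y ≤ μ(L) ‖y‖²` to every difference `xₛ - xₜ`. Colour classes are
independent, so `xₛᵀ L xₛ = xₛᵀ D xₛ`, and summing over all pairs `(s, t)` gives
`(r - 1) xᵀ D x + xᵀ A x ≤ (r - 1) μ(L) ‖x‖²`. Hence `μ(D + A/(r-1)) ≤ μ(L) ≤ (r - 1) μ(L)`.
-/

open Matrix SimpleGraph

section Spectral

open scoped MatrixOrder

variable {n : ℕ} {M : Matrix (Fin n) (Fin n) ℝ}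

lemma le_maxEigR_of_mem_spectrum {x : ℝ} (hx : x ∈ spectrum ℝ M) : x ≤ maxEigR M :=
  le_csSup M.finite_real_spectrum.bddAbove hx

lemma Matrix.IsHermitian.le_algebraMap_iff_dotProduct_mulVec_le {ι : Type*} [Fintype ι]
    [DecidableEq ι] {M : Matrix ι ι ℝ} (hM : M.IsHermitian) (c : ℝ) :
    M ≤ algebraMap ℝ _ c ↔ ∀ x, x ⬝ᵥ (M *ᵥ x) ≤ c * (x ⬝ᵥ x) := by
  have hsub : (algebraMap ℝ (Matrix ι ι ℝ) c - M).IsHermitian :=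
    (isHermitian_diagonal _).sub hM
  rw [Matrix.le_iff, posSemidef_iff_dotProduct_mulVec, and_iff_right hsub]
  simp [sub_mulVec, Algebra.algebraMap_eq_smul_one, smul_mulVec]

lemma Matrix.IsHermitian.dotProduct_mulVec_le_maxEigR_s9 (hM : M.IsHermitian) (x : Fin n → ℝ) :
    x ⬝ᵥ (M *ᵥ x) ≤ maxEigR M * (x ⬝ᵥ x) :=
  (hM.le_algebraMap_iff_dotProduct_mulVec_le _).mp
    (le_algebraMap_of_spectrum_le (fun _ => le_maxEigR_of_mem_spectrum) hM.isSelfAdjoint) x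

lemma Matrix.IsHermitian.maxEigR_le [Nonempty (Fin n)] (hM : M.IsHermitian) {c : ℝ}
    (h : ∀ x, x ⬝ᵥ (M *ᵥ x) ≤ c * (x ⬝ᵥ x)) : maxEigR M ≤ c := by
  have hspec := (le_algebraMap_iff_spectrum_le hM.isSelfAdjoint).mp
    ((hM.le_algebraMap_iff_dotProduct_mulVec_le c).mpr h)
  exact csSup_le (hM.spectrum_real_eq_range_eigenvalues ▸ Set.range_nonempty _) hspec

lemma Matrix.PosSemidef.maxEigR_nonneg [Nonempty (Fin n)] (hM : M.PosSemidef) :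
    0 ≤ maxEigR M := by
  obtain ⟨i⟩ := ‹Nonempty (Fin n)›
  exact (hM.eigenvalues_nonneg i).trans
    (le_maxEigR_of_mem_spectrum (hM.1.eigenvalues_mem_spectrum_real i))

end Spectral

lemma Finset.sum_indicator_preimage_singleton {ι α R : Type*} [Fintype α] [AddCommMonoid R]
    (C : ι → α) (x : ι → R) : ∑ s, (C ⁻¹' {s}).indicator x = x := by
  classical
  ext v
  simp [Finset.sum_apply, Set.indicator_apply]

section QuadraticForm

variable {ι α R : Type*} [Fintype ι] [Fintype α] [CommRing R]

lemma Matrix.sum_sum_sub_dotProduct_mulVec_sub (M : Matrix ι ι R) (f : α → ι → R) :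
    ∑ s, ∑ t, (f s - f t) ⬝ᵥ (M *ᵥ (f s - f t)) =
      2 * Fintype.card α * ∑ s, f s ⬝ᵥ (M *ᵥ f s) -
        2 * ((∑ s, f s) ⬝ᵥ (M *ᵥ ∑ s, f s)) := by
  have hcross' : ∑ s, ∑ t, f t ⬝ᵥ (M *ᵥ f s) = (∑ s, f s) ⬝ᵥ (M *ᵥ ∑ s, f s) := by
    simp only [mulVec_sum, dotProduct_sum, sum_dotProduct]
  have hcross : ∑ s, ∑ t, f s ⬝ᵥ (M *ᵥ f t) = (∑ s, f s) ⬝ᵥ (M *ᵥ ∑ s, f s) :=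
    Finset.sum_comm.trans hcross'
  simp only [mulVec_sub, dotProduct_sub, sub_dotProduct, Finset.sum_sub_distrib,
    Finset.sum_const, Finset.card_univ, nsmul_eq_mul, ← Finset.mul_sum, hcross, hcross']
  ring

lemma Matrix.sum_indicator_dotProduct_mulVec_indicator (C : ι → α) (M : Matrix ι ι R)
    (hM : ∀ v w, v ≠ w → C v = C w → M v w = 0) (x : ι → R) :
    ∑ s, (C ⁻¹' {s}).indicator x ⬝ᵥ (M *ᵥ (C ⁻¹' {s}).indicator x) =
      ∑ v, M v v * (x v * x v) := by
  have hmem : ∀ v, v ∈ C ⁻¹' {C v} := fun v => rfl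
  have hrow : ∀ v, (M *ᵥ (C ⁻¹' {C v}).indicator x) v = M v v * x v := by
    intro v
    rw [mulVec, dotProduct, Finset.sum_eq_single v]
    · rw [Set.indicator_of_mem (hmem v)]
    · intro w _ hwv
      by_cases hw : C w = C v
      · rw [hM v w hwv.symm hw.symm, zero_mul]
      · rw [Set.indicator_of_notMem (show w ∉ C ⁻¹' {C v} from hw), mul_zero]
    · simp
  simp only [dotProduct]
  rw [Finset.sum_comm]
  refine Finset.sum_congr rfl fun v _ => ?_
  rw [Finset.sum_eq_single (C v)]
  · rw [hrow, Set.indicator_of_mem (hmem v)]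
    ring
  · intro s _ hs
    rw [Set.indicator_of_notMem (show v ∉ C ⁻¹' {s} from Ne.symm hs), zero_mul]
  · simp

end QuadraticForm

namespace SimpleGraph.Coloring

variable {V α : Type*} [Fintype V] [DecidableEq V] {G : SimpleGraph V} [DecidableRel G.Adj]

lemma lapMatrix_eq_zero_of_color_eq (C : G.Coloring α) {v w : V} (hvw : v ≠ w)
    (hC : C v = C w) : G.lapMatrix ℝ v w = 0 := by
  have hadj : ¬ G.Adj v w := fun h => C.valid h hC
  simp [lapMatrix, degMatrix, hvw, hadj]

lemma card_sub_one_mul_dotProduct_degMatrix_add_le [Fintype α] (C : G.Coloring α) {μ : ℝ}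
    (hμ : ∀ y, y ⬝ᵥ (G.lapMatrix ℝ *ᵥ y) ≤ μ * (y ⬝ᵥ y)) (x : V → ℝ) :
    ((Fintype.card α : ℝ) - 1) * (x ⬝ᵥ (G.degMatrix ℝ *ᵥ x)) + x ⬝ᵥ (G.adjMatrix ℝ *ᵥ x) ≤
      ((Fintype.card α : ℝ) - 1) * (μ * (x ⬝ᵥ x)) := by
  set f : α → V → ℝ := fun s => (C ⁻¹' {s}).indicator x
  have hsum : ∑ s, f s = x := Finset.sum_indicator_preimage_singleton C x
  have hlap : ∑ s, f s ⬝ᵥ (G.lapMatrix ℝ *ᵥ f s) = x ⬝ᵥ (G.degMatrix ℝ *ᵥ x) := by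
    rw [sum_indicator_dotProduct_mulVec_indicator C _ (fun _ _ => C.lapMatrix_eq_zero_of_color_eq),
      dotProduct]
    refine Finset.sum_congr rfl fun v _ => ?_
    rw [degMatrix_mulVec_apply]
    simp [lapMatrix, degMatrix, mul_left_comm]
  have hnorm : ∑ s, f s ⬝ᵥ f s = x ⬝ᵥ x := by
    simpa [f, dotProduct] using sum_indicator_dotProduct_mulVec_indicator C (1 : Matrix V V ℝ)
      (fun _ _ h _ => one_apply_ne h) x
  have hpairs : ∑ s, ∑ t, (f s - f t) ⬝ᵥ (G.lapMatrix ℝ *ᵥ (f s - f t)) ≤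
      μ * ∑ s, ∑ t, (f s - f t) ⬝ᵥ (f s - f t) := by
    simp only [Finset.mul_sum]
    gcongr
    exact hμ _
  have hnormPairs := sum_sum_sub_dotProduct_mulVec_sub (1 : Matrix V V ℝ) f
  simp only [one_mulVec] at hnormPairs
  rw [sum_sum_sub_dotProduct_mulVec_sub, hnormPairs, hsum, hlap, hnorm, lapMatrix, sub_mulVec,
    dotProduct_sub] at hpairs
  linear_combination hpairs / 2

lemma maxEigR_degMatrix_add_inv_smul_adjMatrix_le {n : ℕ} [Nonempty (Fin n)] {α : Type*}
    [Fintype α] {G : SimpleGraph (Fin n)} [DecidableRel G.Adj] (C : G.Coloring α)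
    (hα : 1 < Fintype.card α) :
    maxEigR (G.degMatrix ℝ + ((Fintype.card α : ℝ) - 1)⁻¹ • G.adjMatrix ℝ) ≤
      maxEigR (G.lapMatrix ℝ) := by
  have hk : (0 : ℝ) < (Fintype.card α : ℝ) - 1 := by
    rw [sub_pos]; exact_mod_cast hα
  have hM : (G.degMatrix ℝ + ((Fintype.card α : ℝ) - 1)⁻¹ • G.adjMatrix ℝ).IsHermitian :=
    (G.isHermitian_degMatrix ℝ).add ((G.isHermitian_adjMatrix ℝ).smul (IsSelfAdjoint.all _))
  refine hM.maxEigR_le fun x => ?_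
  have h := C.card_sub_one_mul_dotProduct_degMatrix_add_le
    (G.posSemidef_lapMatrix ℝ).1.dotProduct_mulVec_le_maxEigR_s9 x
  rw [add_mulVec, dotProduct_add, smul_mulVec, dotProduct_smul, smul_eq_mul]
  field_simp
  linarith

end SimpleGraph.Coloring

/-- For a connected graph with chromatic number `r ≥ 2`,
`μ(D + (1/(r−1))·A) ≤ (r−1)·μ(L)`. -/
theorem stmt9 {n r : ℕ} (G : SimpleGraph (Fin n)) [DecidableRel G.Adj]
    (hconn : G.Connected) (hr : 2 ≤ r) (hχ : G.chromaticNumber = (r : ℕ∞)) :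
    maxEigR (G.degMatrix ℝ + ((r : ℝ) - 1)⁻¹ • G.adjMatrix ℝ) ≤
      ((r : ℝ) - 1) * maxEigR (G.lapMatrix ℝ) := by
  have := hconn.nonempty
  obtain ⟨C⟩ := chromaticNumber_le_iff_colorable.mp hχ.le
  have hr1 : (1 : ℝ) ≤ (r : ℝ) - 1 := by
    rw [le_sub_iff_add_le]; exact_mod_cast hr
  calc maxEigR (G.degMatrix ℝ + ((r : ℝ) - 1)⁻¹ • G.adjMatrix ℝ)
      ≤ maxEigR (G.lapMatrix ℝ) := by
        simpa using C.maxEigR_degMatrix_add_inv_smul_adjMatrix_le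
          (by rw [Fintype.card_fin]; omega)
    _ ≤ ((r : ℝ) - 1) * maxEigR (G.lapMatrix ℝ) :=
        le_mul_of_one_le_left (G.posSemidef_lapMatrix ℝ).maxEigR_nonneg hr1
end

section
/- Let G be a k-regular graph with at least one edge, adjacency matrix A, smallest adjacency eigenvalue −τ (τ > 0), and independence number α(G). Then α(G) ≤ n·τ/(k+τ), where n is the number of vertices. -/
/-!
If `-τ` is the least eigenvalue of `A`, the form `v ↦ vᵀ (A + τ I) v` is nonnegative. Evaluate it
at `y = n·1_S - |S|·1` for an independent set `S`: since `1_Sᵀ A 1_S = 0` and `A 1 = k 1`, it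
equals `n|S|(nτ - |S|(k + τ))`, and its nonnegativity is the ratio bound.
-/

open Matrix SimpleGraph

theorem minEigR_le {n : ℕ} (A : Matrix (Fin n) (Fin n) ℝ) {μ : ℝ} (hμ : μ ∈ spectrum ℝ A) :
    minEigR A ≤ μ :=
  csInf_le A.finite_spectrum.bddBelow hμ

namespace Matrix

variable {ι : Type*} [Fintype ι]

open scoped Pointwise in
theorem IsHermitian.posSemidef_add_algebraMap [DecidableEq ι] {A : Matrix ι ι ℝ}
    (hA : A.IsHermitian) {c : ℝ} (hc : ∀ μ ∈ spectrum ℝ A, -c ≤ μ) :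
    (A + algebraMap ℝ _ c).PosSemidef := by
  refine posSemidef_iff_isHermitian_and_spectrum_nonneg.2
    ⟨hA.add (IsSelfAdjoint.algebraMap _ (.all c)), ?_⟩
  rw [← spectrum.add_singleton_eq]
  rintro _ ⟨μ, hμ, _, rfl, rfl⟩
  simpa [neg_le_iff_add_nonneg] using hc μ hμ

theorem IsHermitian.neg_mul_dotProduct_le_dotProduct_mulVec [DecidableEq ι] {A : Matrix ι ι ℝ}
    (hA : A.IsHermitian) {c : ℝ} (hc : ∀ μ ∈ spectrum ℝ A, -c ≤ μ) (v : ι → ℝ) :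
    -c * (v ⬝ᵥ v) ≤ v ⬝ᵥ (A *ᵥ v) := by
  have := (hA.posSemidef_add_algebraMap hc).dotProduct_mulVec_nonneg v
  rw [Algebra.algebraMap_eq_smul_one, add_mulVec, smul_mulVec, one_mulVec, dotProduct_add,
    dotProduct_smul, star_trivial, smul_eq_mul] at this
  linarith

theorem IsSymm.dotProduct_mulVec_smul_sub_smul_one {R : Type*} [CommRing R] {A : Matrix ι ι R}
    (hA : A.IsSymm) {k : R} (hk : A *ᵥ 1 = k • 1) (x : ι → R) (a b : R) :
    (a • x - b • 1) ⬝ᵥ (A *ᵥ (a • x - b • 1)) =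
      a ^ 2 * (x ⬝ᵥ (A *ᵥ x)) - 2 * a * b * k * (x ⬝ᵥ 1) + b ^ 2 * k * Fintype.card ι := by
  have hk' : (1 : ι → R) ⬝ᵥ (A *ᵥ x) = k * (x ⬝ᵥ 1) := by
    rw [dotProduct_mulVec, ← mulVec_transpose, hA.eq, hk, smul_dotProduct, dotProduct_comm,
      smul_eq_mul]
  simp only [mulVec_sub, mulVec_smul, hk, dotProduct_sub, sub_dotProduct, dotProduct_smul,
    smul_dotProduct, hk', one_dotProduct_one, smul_eq_mul]
  ring

theorem smul_sub_smul_one_dotProduct_self {R : Type*} [CommRing R] [DecidableEq ι] (x : ι → R)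
    (a b : R) :
    (a • x - b • 1) ⬝ᵥ (a • x - b • 1) =
      a ^ 2 * (x ⬝ᵥ x) - 2 * a * b * (x ⬝ᵥ 1) + b ^ 2 * Fintype.card ι := by
  simpa using isSymm_one.dotProduct_mulVec_smul_sub_smul_one (k := 1) (by simp) x a b

end Matrix

namespace SimpleGraph

variable {V R : Type*} [Fintype V] [NonAssocSemiring R] {G : SimpleGraph V} [DecidableRel G.Adj]

theorem IsRegularOfDegree.adjMatrix_mulVec_one {k : ℕ} (hG : G.IsRegularOfDegree k) :
    G.adjMatrix R *ᵥ 1 = (k : R) • 1 := by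
  ext v
  simpa using adjMatrix_mulVec_const_apply_of_regular (α := R) (a := 1) hG (v := v)

variable {s : Finset V}

theorem indicator_dotProduct_indicator :
    (s : Set V).indicator 1 ⬝ᵥ (s : Set V).indicator (1 : V → R) = s.card := by
  classical simp [dotProduct, Set.indicator_apply]

theorem indicator_dotProduct_one : (s : Set V).indicator 1 ⬝ᵥ (1 : V → R) = s.card := by
  classical simp [dotProduct, Set.indicator_apply]

theorem IsIndepSet.indicator_dotProduct_adjMatrix_mulVec (hs : G.IsIndepSet (s : Set V)) :
    (s : Set V).indicator 1 ⬝ᵥ (G.adjMatrix R *ᵥ (s : Set V).indicator (1 : V → R)) = 0 := by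
  rw [dotProduct_mulVec_adjMatrix]
  refine Finset.sum_eq_zero fun u _ => Finset.sum_eq_zero fun v _ => ?_
  by_cases huv : G.Adj u v
  · have : u ∉ s ∨ v ∉ s := by
      by_contra! h
      exact hs h.1 h.2 (G.ne_of_adj huv) huv
    rcases this with h | h <;> simp [h]
  · simp [huv]

end SimpleGraph

theorem stmt11_general {n k : ℕ} (G : SimpleGraph (Fin n)) [DecidableRel G.Adj]
    (hreg : G.IsRegularOfDegree k)
    (τ : ℝ) (hτ : minEigR (G.adjMatrix ℝ) = -τ) (hτpos : 0 < τ) :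
    ∀ s : Finset (Fin n), (∀ u ∈ s, ∀ v ∈ s, ¬ G.Adj u v) →
      (s.card : ℝ) ≤ (n : ℝ) * τ / ((k : ℝ) + τ) := by
  intro s hs
  have hindep : G.IsIndepSet (s : Set (Fin n)) := fun u hu v hv _ => hs u hu v hv
  have hA : (G.adjMatrix ℝ).IsHermitian := isHermitian_iff_isSymm.2 G.isSymm_adjMatrix
  have hform := hA.neg_mul_dotProduct_le_dotProduct_mulVec (fun μ hμ => hτ ▸ minEigR_le _ hμ)
    ((n : ℝ) • (s : Set (Fin n)).indicator 1 - (s.card : ℝ) • 1)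
  rw [smul_sub_smul_one_dotProduct_self, G.isSymm_adjMatrix.dotProduct_mulVec_smul_sub_smul_one
    hreg.adjMatrix_mulVec_one, hindep.indicator_dotProduct_adjMatrix_mulVec,
    indicator_dotProduct_indicator, indicator_dotProduct_one, Fintype.card_fin] at hform
  have hratio : 0 ≤ (n * s.card) * (n * τ - s.card * (k + τ)) := by linarith
  rw [le_div_iff₀ (by positivity)]
  rcases (Nat.cast_nonneg s.card : (0 : ℝ) ≤ s.card).eq_or_lt with hempty | hpos
  · rw [← hempty, zero_mul]; positivity
  · have hcard : (s.card : ℝ) ≤ n := by exact_mod_cast s.card_le_univ.trans_eq (Fintype.card_fin n)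
    exact sub_nonneg.1 (nonneg_of_mul_nonneg_right hratio (mul_pos (hpos.trans_le hcard) hpos))

/-- Hoffman's ratio bound: for a `k`-regular graph with an edge and smallest
adjacency eigenvalue `−τ` (`τ > 0`), every independent set has size at most
`n·τ/(k+τ)`. -/
theorem stmt11 {n k : ℕ} (G : SimpleGraph (Fin n)) [DecidableRel G.Adj]
    (hreg : G.IsRegularOfDegree k) (hedge : ∃ u v, G.Adj u v)
    (τ : ℝ) (hτ : minEigR (G.adjMatrix ℝ) = -τ) (hτpos : 0 < τ) :
    ∀ s : Finset (Fin n), (∀ u ∈ s, ∀ v ∈ s, ¬ G.Adj u v) →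
      (s.card : ℝ) ≤ (n : ℝ) * τ / ((k : ℝ) + τ) :=
  stmt11_general G hreg τ hτ hτpos
end

section
/- Let G be a nonempty regular graph such that every two color classes of some proper χ(G)-coloring induce a τ-regular bipartite subgraph, where τ = |μ_min(A(G))|. Then χ(G) = 1 + μ(A)/( −μ_min(A)), i.e., equality holds in Hoffman's bound. -/
open Matrix SimpleGraph

lemma mem_spectrum_iff_exists' {n : ℕ} (A : Matrix (Fin n) (Fin n) ℝ) (μ : ℝ) :
    μ ∈ spectrum ℝ A ↔ ∃ x : Fin n → ℝ, x ≠ 0 ∧ A.mulVec x = μ • x := by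
  rw [← AlgEquiv.spectrum_eq (Matrix.toLinAlgEquiv' (R := ℝ) (n := Fin n)) A,
    ← Module.End.hasEigenvalue_iff_mem_spectrum, Module.End.hasEigenvalue_iff,
    Submodule.ne_bot_iff]
  constructor
  · rintro ⟨x, hx, hx0⟩
    rw [Module.End.mem_eigenspace_iff] at hx
    exact ⟨x, hx0, by simpa [Matrix.toLinAlgEquiv'_apply] using hx⟩
  · rintro ⟨x, hx0, hx⟩
    exact ⟨x, by rw [Module.End.mem_eigenspace_iff]; simpa [Matrix.toLinAlgEquiv'_apply] using hx, hx0⟩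

/-- If `G` is regular with an edge and there is a proper `χ(G)`-coloring such
that every two color classes induce a `τ`-regular bipartite subgraph, where
`τ = −μ_min(A)`, then equality holds in Hoffman's bound. -/
theorem stmt18 {n r d : ℕ} (G : SimpleGraph (Fin n)) [DecidableRel G.Adj]
    (hedge : ∃ u v, G.Adj u v) (hreg : G.IsRegularOfDegree d)
    (hχ : G.chromaticNumber = (r : ℕ∞)) (C : G.Coloring (Fin r))
    (hbireg : ∀ c c' : Fin r, c ≠ c' → ∀ v : Fin n, C v = c →
      ((Finset.univ.filter fun w => C w = c' ∧ G.Adj v w).card : ℝ) =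
        - minEigR (G.adjMatrix ℝ)) :
    (r : ℝ) = 1 + maxEigR (G.adjMatrix ℝ) / (- minEigR (G.adjMatrix ℝ)) := by
  obtain ⟨u, v, huv⟩ := hedge
  set A := G.adjMatrix ℝ with hA
  set τ : ℝ := - minEigR A with hτdef
  have hne : C u ≠ C v := C.valid huv
  -- τ ≥ 1
  have hτ1 : (1:ℝ) ≤ τ := by
    have hv : v ∈ Finset.univ.filter fun w => C w = C v ∧ G.Adj u w := by simp [huv]
    have hc : (1:ℝ) ≤ ((Finset.univ.filter fun w => C w = C v ∧ G.Adj u w).card : ℝ) := by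
      exact_mod_cast Finset.card_pos.mpr ⟨v, hv⟩
    exact hc.trans_eq (hbireg (C u) (C v) hne u rfl)
  have hτ0 : (0:ℝ) < τ := lt_of_lt_of_le one_pos hτ1
  -- degree count : d = (r-1) * τ
  have hr1 : 1 ≤ r := Nat.one_le_iff_ne_zero.mpr fun h => by subst h; exact Fin.elim0 (C u)
  have hcount : (d : ℝ) = ((r : ℝ) - 1) * τ := by
    have hfib : (G.neighborFinset u).card =
        ∑ c' ∈ Finset.univ.erase (C u), ((G.neighborFinset u).filter fun w => C w = c').card :=
      Finset.card_eq_sum_card_fiberwise (fun w hw => by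
        simp only [Finset.mem_coe, Finset.mem_erase, Finset.mem_univ, and_true]
        exact fun h => (C.valid (G.mem_neighborFinset u w |>.mp hw)).symm (h ▸ rfl))
    have hdeg : G.degree u = d := hreg u
    have hcast : ((G.neighborFinset u).card : ℝ) =
        ∑ c' ∈ Finset.univ.erase (C u),
          (((G.neighborFinset u).filter fun w => C w = c').card : ℝ) := by
      exact_mod_cast congrArg (Nat.cast : ℕ → ℝ) hfib
    have hsame : ∀ c' ∈ Finset.univ.erase (C u),
        (((G.neighborFinset u).filter fun w => C w = c').card : ℝ) = τ := by
      intro c' hc'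
      have hcc : C u ≠ c' := fun h => (Finset.mem_erase.mp hc').1 h.symm
      rw [← hbireg (C u) c' hcc u rfl]
      congr 1
      congr 1
      ext w
      simp [SimpleGraph.mem_neighborFinset, and_comm]
    rw [Finset.sum_congr rfl hsame, Finset.sum_const, nsmul_eq_mul,
      Finset.card_erase_of_mem (Finset.mem_univ _), Finset.card_univ, Fintype.card_fin] at hcast
    rw [← hdeg, ← SimpleGraph.card_neighborFinset_eq_degree, hcast]
    congr 1
    push_cast [Nat.cast_sub hr1]
    ring
  -- maxEigR A = d
  have hd_mem : (d : ℝ) ∈ spectrum ℝ A := by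
    rw [mem_spectrum_iff_exists']
    refine ⟨Function.const _ 1, ?_, ?_⟩
    · intro h
      simpa using congrFun h u
    · ext w
      simp only [Pi.smul_apply, Function.const_apply, smul_eq_mul, mul_one, hA]
      rw [SimpleGraph.adjMatrix_mulVec_apply]
      simp [hreg w]
  have hub : ∀ μ ∈ spectrum ℝ A, μ ≤ (d : ℝ) := by
    intro μ hμ
    rw [mem_spectrum_iff_exists'] at hμ
    obtain ⟨x, hx0, hx⟩ := hμ
    obtain ⟨i, -, hi⟩ := Finset.exists_max_image Finset.univ (fun i => |x i|)
      ⟨u, Finset.mem_univ u⟩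
    have hxi : x i ≠ 0 := by
      intro h
      apply hx0
      ext j
      have := hi j (Finset.mem_univ j)
      rw [h, abs_zero] at this
      simpa using abs_nonpos_iff.mp this
    have hxi' : 0 < |x i| := abs_pos.mpr hxi
    have key : |μ| * |x i| ≤ (d : ℝ) * |x i| := by
      have h1 : (A.mulVec x) i = μ * x i := by
        have := congrFun hx i
        simpa using this
      have h2 : |μ| * |x i| = |(A.mulVec x) i| := by rw [h1, abs_mul]
      rw [h2, hA, SimpleGraph.adjMatrix_mulVec_apply]
      calc |∑ w ∈ G.neighborFinset i, x w| ≤ ∑ w ∈ G.neighborFinset i, |x w| :=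
            Finset.abs_sum_le_sum_abs _ _
        _ ≤ ∑ w ∈ G.neighborFinset i, |x i| :=
            Finset.sum_le_sum fun w _ => hi w (Finset.mem_univ w)
        _ = (d : ℝ) * |x i| := by
            rw [Finset.sum_const, nsmul_eq_mul, SimpleGraph.card_neighborFinset_eq_degree, hreg i]
    have : |μ| ≤ (d : ℝ) := le_of_mul_le_mul_right key hxi'
    exact (le_abs_self μ).trans this
  have hmax : maxEigR A = (d : ℝ) :=
    le_antisymm (csSup_le ⟨_, hd_mem⟩ hub) (le_csSup ⟨(d : ℝ), hub⟩ hd_mem)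
  rw [hmax, hcount]
  field_simp
  ring
end
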